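/- arXiv:2008.12929 — 3 statements merged into one kernel-verified Lean document; each statement's English description precedes it below -/
import Mathlib

section
/- Let M > 0 be a real number, q ≥ 1 an integer, and p ∈ {0,…,q−1} with gcd(p,q)=1. Then for every Schwartz function g : ℝ → ℂ one has ∑_{k∈ℤ} e^{−2πi p k²/q} ∫_ℝ g(x) e^{iMkx} dx = (2π/(Mq)) ∑_{m∈ℤ} G(−p, m mod q, q) · g(2πm/(Mq)), both series converging absolutely. -/
/-!
The pairing of `g` with `e^{iMkx}` is the value of `ĝ = 𝓕 g` at `ck`, `c = -M/(2π)`, and the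
phase `e^{-2πipk²/q}` depends only on `k mod q`. Splitting the sum over `k` into the residue
classes `k = ℓ + nq` and applying Poisson summation to `ĝ` on each shifted lattice `c(ℓ + qℤ)`
turns it into a sum of `𝓕 ĝ = g(-·)` over `(cq)⁻¹ℤ`, twisted by the characters `e^{2πiℓm/q}`.
Summing the phases against these characters over `ℓ` gives the Gauss sums `G(-p, m, q)`.
-/

open Complex Finset

/-- Generalized quadratic Gauss sum `G(a,b,c) = ∑_{ℓ=0}^{c-1} e^{2πi(aℓ² + bℓ)/c}`. -/
noncomputable def gaussSumGen (a b : ℤ) (c : ℕ) : ℂ :=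
  ∑ ℓ ∈ Finset.range c,
    Complex.exp (2 * Real.pi * Complex.I * ((a : ℂ) * (ℓ : ℂ) ^ 2 + (b : ℂ) * (ℓ : ℂ)) / (c : ℂ))

open MeasureTheory Real FourierTransform SchwartzMap

theorem Int.sumByResidueClasses {R : Type*} [AddCommGroup R] [UniformSpace R]
    [IsUniformAddGroup R] [CompleteSpace R] [T0Space R] {f : ℤ → R} (hf : Summable f)
    (N : ℕ) [NeZero N] :
    ∑' n, f n = ∑ j ∈ Finset.range N, ∑' m : ℤ, f (j + m * N) := by
  obtain ⟨e, he⟩ : ∃ e : Fin N × ℤ ≃ ℤ, ∀ j m, e (j, m) = m * N + (j : ℕ) :=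
    ⟨(Equiv.prodComm _ _).trans (Int.divModEquiv N).symm, fun _ _ => rfl⟩
  rw [← e.tsum_eq f, Summable.tsum_prod (f := fun p => f (e p)) (e.summable_iff.mpr hf),
    tsum_fintype, ← Fin.sum_univ_eq_sum_range (fun j => ∑' m : ℤ, f (j + m * N))]
  simp only [he, add_comm]

theorem Function.Periodic.norm_le_sum_range {E : Type*} [SeminormedAddCommGroup E]
    {φ : ℤ → E} {q : ℕ} (hφ : Function.Periodic φ q) (hq : q ≠ 0) (k : ℤ) :
    ‖φ k‖ ≤ ∑ ℓ ∈ range q, ‖φ ℓ‖ := by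
  have hq' : (0 : ℤ) < q := by omega
  have hk : φ k = φ (k % q).toNat := by
    rw [Int.toNat_of_nonneg (Int.emod_nonneg _ hq'.ne')]
    conv_lhs => rw [← Int.emod_add_mul_ediv k q, mul_comm]
    exact hφ.int_mul (k / q) (k % q)
  rw [hk]
  refine single_le_sum (f := fun ℓ : ℕ => ‖φ ℓ‖) (fun _ _ => norm_nonneg _) (mem_range.mpr ?_)
  have := Int.emod_lt_of_pos k hq'
  omega

namespace SchwartzMap

variable {E : Type*} [NormedAddCommGroup E] [NormedSpace ℝ E]

theorem summable_norm_int (f : 𝓢(ℝ, E)) : Summable fun n : ℤ => ‖f n‖ :=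
  summable_of_isBigO (Real.summable_abs_int_rpow one_lt_two)
    ((f.isBigO_cocompact_rpow (-2)).norm_left.comp_tendsto Int.tendsto_coe_cofinite)

noncomputable def compMulLeft (a : ℝ) (ha : a ≠ 0) : 𝓢(ℝ, E) →L[ℝ] 𝓢(ℝ, E) :=
  compCLMOfContinuousLinearEquiv ℝ (ContinuousLinearEquiv.smulLeft (Units.mk0 a ha))

@[simp]
theorem compMulLeft_apply {a : ℝ} (ha : a ≠ 0) (f : 𝓢(ℝ, E)) (x : ℝ) :
    compMulLeft a ha f x = f (a * x) := by
  simp [compMulLeft, Units.smul_def]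

theorem summable_norm_comp_mul_int (f : 𝓢(ℝ, E)) {a : ℝ} (ha : a ≠ 0) :
    Summable fun n : ℤ => ‖f (a * n)‖ := by
  simpa using (compMulLeft a ha f).summable_norm_int

end SchwartzMap

theorem Real.fourier_comp_mul_left {E : Type*} [NormedAddCommGroup E] [NormedSpace ℂ E]
    (f : ℝ → E) {a : ℝ} (ha : a ≠ 0) (ξ : ℝ) :
    𝓕 (fun y => f (a * y)) ξ = |a|⁻¹ • 𝓕 f (ξ / a) := by
  rw [Real.fourier_real_eq, Real.fourier_real_eq, ← abs_inv,
    ← Measure.integral_comp_mul_left (fun y => 𝐞 (-(y * (ξ / a))) • f y) a]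
  congr! 4 with y
  field_simp

theorem Real.integral_mul_cexp_eq_fourier (f : ℝ → ℂ) (s : ℝ) :
    ∫ x : ℝ, f x * cexp (I * s * x) = 𝓕 f (-s / (2 * π)) := by
  rw [Real.fourier_real_eq_integral_exp_smul]
  refine integral_congr_ae (.of_forall fun x => ?_)
  simp only [smul_eq_mul, mul_comm (f x)]
  congr 2
  push_cast
  field_simp

theorem SchwartzMap.fourier_fourier_apply {V E : Type*} [NormedAddCommGroup V]
    [InnerProductSpace ℝ V] [FiniteDimensional ℝ V] [MeasurableSpace V] [BorelSpace V]
    [NormedAddCommGroup E] [NormedSpace ℂ E] [CompleteSpace E] (f : 𝓢(V, E)) (x : V) :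
    𝓕 (𝓕 f) x = f (-x) := by
  conv_rhs => rw [← fourierInv_fourier_eq (F := 𝓢(V, E)) f, fourierInv_coe,
    Real.fourierInv_eq_fourier_neg, neg_neg]
  rfl

theorem SchwartzMap.tsum_comp_mul_add_eq (f : 𝓢(ℝ, ℂ)) {a : ℝ} (ha : a ≠ 0) (x : ℝ) :
    ∑' n : ℤ, f (a * (x + n)) =
      ((|a|⁻¹ : ℝ) : ℂ) * ∑' n : ℤ, 𝓕 f (n / a) * fourier n (x : UnitAddCircle) := by
  have hcomp : ⇑(compMulLeft a ha f) = fun y => f (a * y) := funext (compMulLeft_apply ha f)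
  have hpoisson := (compMulLeft a ha f).tsum_eq_tsum_fourier x
  rw [hcomp] at hpoisson
  rw [hpoisson, ← tsum_mul_left]
  refine tsum_congr fun n => ?_
  rw [fourier_coe, hcomp, Real.fourier_comp_mul_left _ ha, fourier_coe, Complex.real_smul,
    mul_assoc]

theorem SchwartzMap.tsum_fourier_comp_mul_add_int_mul (g : 𝓢(ℝ, ℂ)) {c : ℝ} (hc : c ≠ 0)
    {q : ℕ} (hq : q ≠ 0) (ℓ : ℕ) :
    ∑' n : ℤ, 𝓕 g (c * (ℓ + n * q)) =
      ((|c * q|⁻¹ : ℝ) : ℂ) * ∑' m : ℤ, cexp (2 * π * I * ℓ * m / q) * g (-(m / (c * q))) := by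
  have hq' : (q : ℝ) ≠ 0 := Nat.cast_ne_zero.mpr hq
  calc ∑' n : ℤ, 𝓕 g (c * (ℓ + n * q))
      = ∑' n : ℤ, 𝓕 g (c * q * (ℓ / q + n)) :=
        tsum_congr fun n => by congr 1; field_simp
    _ = _ := (𝓕 g).tsum_comp_mul_add_eq (mul_ne_zero hc hq') (ℓ / q)
    _ = _ := by
        congr 1
        refine tsum_congr fun m => ?_
        rw [fourier_fourier_apply, fourier_coe_apply, mul_comm]
        congr 2
        push_cast
        field_simp

theorem SchwartzMap.tsum_periodic_mul_fourier_comp_mul (g : 𝓢(ℝ, ℂ)) {c : ℝ} (hc : c ≠ 0)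
    {q : ℕ} [NeZero q] {φ : ℤ → ℂ} (hφ : Function.Periodic φ q) :
    ∑' k : ℤ, φ k * 𝓕 g (c * k) = ((|c * q|⁻¹ : ℝ) : ℂ) *
      ∑' m : ℤ, (∑ ℓ ∈ range q, φ ℓ * cexp (2 * π * I * ℓ * m / q)) * g (-(m / (c * q))) := by
  have hsummable : Summable fun k : ℤ => φ k * 𝓕 g (c * k) :=
    Summable.of_norm_bounded (((𝓕 g).summable_norm_comp_mul_int hc).mul_left _) fun k => by
      rw [norm_mul]
      gcongr
      exact hφ.norm_le_sum_range (NeZero.ne q) k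
  have hsummable_twist (ℓ : ℕ) : Summable fun m : ℤ =>
      cexp (2 * π * I * ℓ * m / q) * g (-(m / (c * q))) := by
    have hcq : -(c * q)⁻¹ ≠ 0 := neg_ne_zero.mpr (inv_ne_zero (mul_ne_zero hc (NeZero.ne _)))
    refine Summable.of_norm ((g.summable_norm_comp_mul_int hcq).congr fun m => ?_)
    have hunit : ‖cexp (2 * π * I * ℓ * m / q)‖ = 1 := by simp [Complex.norm_exp]
    rw [norm_mul, hunit, one_mul, neg_mul, inv_mul_eq_div]
  have hclass (ℓ : ℕ) : ∑' n : ℤ, φ (ℓ + n * q) * 𝓕 g (c * (ℓ + n * q : ℤ)) =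
      φ ℓ * (((|c * q|⁻¹ : ℝ) : ℂ) *
        ∑' m : ℤ, cexp (2 * π * I * ℓ * m / q) * g (-(m / (c * q)))) := by
    rw [← g.tsum_fourier_comp_mul_add_int_mul hc (NeZero.ne q), ← tsum_mul_left]
    refine tsum_congr fun n => ?_
    push_cast
    exact congrArg (· * _) (hφ.int_mul n _)
  calc ∑' k : ℤ, φ k * 𝓕 g (c * k)
      = ∑ ℓ ∈ range q, φ ℓ * (((|c * q|⁻¹ : ℝ) : ℂ) *
          ∑' m : ℤ, cexp (2 * π * I * ℓ * m / q) * g (-(m / (c * q)))) := by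
        rw [Int.sumByResidueClasses hsummable q]
        exact Finset.sum_congr rfl fun ℓ _ => hclass ℓ
    _ = ((|c * q|⁻¹ : ℝ) : ℂ) * ∑ ℓ ∈ range q,
          ∑' m : ℤ, φ ℓ * (cexp (2 * π * I * ℓ * m / q) * g (-(m / (c * q)))) := by
        simp only [Finset.mul_sum, tsum_mul_left, mul_left_comm]
    _ = _ := by
        rw [← Summable.tsum_finsetSum fun ℓ _ => (hsummable_twist ℓ).mul_left (φ ℓ)]
        simp only [Finset.sum_mul, mul_assoc]

theorem periodic_cexp_mul_sq_div (p q : ℕ) :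
    Function.Periodic (fun k : ℤ => cexp (-2 * π * I * p * k ^ 2 / q)) q := by
  intro k
  rcases eq_or_ne q 0 with rfl | hq
  · simp
  have hq' : (q : ℂ) ≠ 0 := Nat.cast_ne_zero.mpr hq
  have hshift : -2 * π * I * p * ((k + q : ℤ) : ℂ) ^ 2 / q
      = -2 * π * I * p * (k : ℂ) ^ 2 / q + ((-(p * (2 * k + q)) : ℤ) : ℂ) * (2 * π * I) := by
    push_cast
    field_simp
    ring
  simp only [hshift, Complex.exp_add, Complex.exp_int_mul_two_pi_mul_I, mul_one]

theorem gaussSumGen_emod (a b : ℤ) (c : ℕ) : gaussSumGen a (b % c) c = gaussSumGen a b c := by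
  rcases eq_or_ne c 0 with rfl | hc
  · simp [gaussSumGen]
  have hc' : (c : ℂ) ≠ 0 := Nat.cast_ne_zero.mpr hc
  refine Finset.sum_congr rfl fun ℓ _ => Complex.exp_eq_exp_iff_exists_int.mpr ⟨-(b / c) * ℓ, ?_⟩
  have hb : (b : ℂ) = c * ((b / c : ℤ) : ℂ) + ((b % c : ℤ) : ℂ) := by
    exact_mod_cast (Int.mul_ediv_add_emod b c).symm
  rw [hb]
  push_cast
  field_simp
  ring

theorem sum_range_cexp_mul_cexp_eq_gaussSumGen (p q : ℕ) (m : ℤ) :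
    ∑ ℓ ∈ range q, cexp (-2 * π * I * p * ((ℓ : ℤ) : ℂ) ^ 2 / q) * cexp (2 * π * I * ℓ * m / q) =
      gaussSumGen (-(p : ℤ)) (m % (q : ℤ)) q := by
  rw [gaussSumGen_emod, gaussSumGen]
  refine Finset.sum_congr rfl fun ℓ _ => ?_
  rw [← Complex.exp_add]
  congr 1
  push_cast
  ring

theorem norm_gaussSumGen_le (a b : ℤ) (c : ℕ) : ‖gaussSumGen a b c‖ ≤ c := by
  refine (norm_sum_le _ _).trans ?_
  simp [Complex.norm_exp, sq]

theorem dirac_comb_evolution_tested_general (M : ℝ) (hM : 0 < M) (q : ℕ) (hq : 1 ≤ q)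
    (p : ℕ) (g : SchwartzMap ℝ ℂ) :
    (Summable fun k : ℤ =>
      ‖Complex.exp (-2 * Real.pi * Complex.I * (p : ℂ) * (k : ℂ) ^ 2 / (q : ℂ)) *
        ∫ x : ℝ, g x * Complex.exp (Complex.I * (M : ℂ) * (k : ℂ) * (x : ℂ))‖) ∧
    (Summable fun m : ℤ =>
      ‖gaussSumGen (-(p : ℤ)) (m % (q : ℤ)) q * g (2 * Real.pi * m / (M * q))‖) ∧
    (∑' k : ℤ,
        Complex.exp (-2 * Real.pi * Complex.I * (p : ℂ) * (k : ℂ) ^ 2 / (q : ℂ)) *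
          ∫ x : ℝ, g x * Complex.exp (Complex.I * (M : ℂ) * (k : ℂ) * (x : ℂ)))
      = (2 * Real.pi / (M * q) : ℝ) *
          ∑' m : ℤ, gaussSumGen (-(p : ℤ)) (m % (q : ℤ)) q * g (2 * Real.pi * m / (M * q)) := by
  have : NeZero q := ⟨by omega⟩
  have hc : -(M / (2 * π)) ≠ 0 := neg_ne_zero.mpr (by positivity)
  have hpair (k : ℤ) : ∫ x : ℝ, g x * cexp (I * M * k * x) = 𝓕 g (-(M / (2 * π)) * k) := by
    rw [show I * M * k = I * ((M * k : ℝ) : ℂ) by push_cast; ring,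
      Real.integral_mul_cexp_eq_fourier, fourier_coe]
    exact congrArg (𝓕 ⇑g) (by ring)
  have hphase (k : ℤ) : ‖cexp (-2 * π * I * p * k ^ 2 / q)‖ = 1 := by
    simp [Complex.norm_exp, sq]
  have hscale : (2 * π / (M * q) : ℝ) ≠ 0 := by positivity
  refine ⟨?_, ?_, ?_⟩
  · refine ((𝓕 g).summable_norm_comp_mul_int hc).congr fun k => ?_
    rw [norm_mul, hphase, one_mul, hpair]
  · refine Summable.of_nonneg_of_le (fun m => norm_nonneg _) (fun m => ?_)
      ((g.summable_norm_comp_mul_int hscale).mul_left (q : ℝ))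
    rw [norm_mul, div_mul_eq_mul_div]
    exact mul_le_mul_of_nonneg_right (norm_gaussSumGen_le _ _ _) (norm_nonneg _)
  · simp only [hpair]
    rw [g.tsum_periodic_mul_fourier_comp_mul hc (periodic_cexp_mul_sq_div p q)]
    congr 1
    · rw [abs_mul, abs_neg, abs_of_pos (by positivity), Nat.abs_cast]
      field_simp
    · refine tsum_congr fun m => ?_
      rw [sum_range_cexp_mul_cexp_eq_gaussSumGen]
      congr 2
      field_simp

/-- Tested form of Proposition 3.4: pairing the Schrödinger evolution of the Dirac comb of
period `2π/M` at the rational time `t_{M,p,q}` against a Schwartz function `g` yields the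
atomic measure `(2π/(Mq)) ∑_m G(-p, m mod q, q) δ_{2πm/(Mq)}`, both series converging
absolutely. -/
theorem dirac_comb_evolution_tested (M : ℝ) (hM : 0 < M) (q : ℕ) (hq : 1 ≤ q)
    (p : ℕ) (hp : p < q) (hcop : Nat.Coprime p q) (g : SchwartzMap ℝ ℂ) :
    (Summable fun k : ℤ =>
      ‖Complex.exp (-2 * Real.pi * Complex.I * (p : ℂ) * (k : ℂ) ^ 2 / (q : ℂ)) *
        ∫ x : ℝ, g x * Complex.exp (Complex.I * (M : ℂ) * (k : ℂ) * (x : ℂ))‖) ∧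
    (Summable fun m : ℤ =>
      ‖gaussSumGen (-(p : ℤ)) (m % (q : ℤ)) q * g (2 * Real.pi * m / (M * q))‖) ∧
    (∑' k : ℤ,
        Complex.exp (-2 * Real.pi * Complex.I * (p : ℂ) * (k : ℂ) ^ 2 / (q : ℂ)) *
          ∫ x : ℝ, g x * Complex.exp (Complex.I * (M : ℂ) * (k : ℂ) * (x : ℂ)))
      = (2 * Real.pi / (M * q) : ℝ) *
          ∑' m : ℤ, gaussSumGen (-(p : ℤ)) (m % (q : ℤ)) q * g (2 * Real.pi * m / (M * q)) :=
  dirac_comb_evolution_tested_general M hM q hq p g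
end

section
/- Let q ≥ 1 be an integer, p ∈ {0,…,q−1} with gcd(p,q)=1, and κ ∈ {0,…,q−1}. Let φ : ℝ → ℂ be a C² function with support contained in [−1,1] and φ(0)=1. Then G(−p,κ,q) = ∑_{k∈ℤ} e^{2πi(−p k² + κ k)/q} ∫_ℝ φ(u) e^{2πi k u/q} du, the series converging absolutely. -/
/-!
Write `F k = ∫ φ(u) e^{2πiku/q} du = 𝓕φ(-k/q)`. Since `φ` is `C²` with compact support, `𝓕φ`
decays like `|x|⁻²`, so the series converges absolutely. The coefficient `e((-pk² + κk)/q)` only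
depends on `k mod q`, and along each residue class `k = ℓ + qm` Poisson summation, applied to
`u ↦ e^{2πiℓu/q} φ(u)`, gives `∑ₘ F(ℓ + qm) = ∑ₙ e^{2πiℓn/q} φ(n) = φ(0) = 1`: a continuous `φ`
supported in `[-1,1]` vanishes at every nonzero integer, `±1` included. Summing over the residues
leaves the Gauss sum.
-/

open Complex Finset

open Filter Asymptotics Real MeasureTheory FourierTransform

theorem Int.hasSum_sum_of_hasSum_residueClasses {E : Type*} [NormedAddCommGroup E] {f : ℤ → E}
    (hf : Summable f) (q : ℕ) [NeZero q] {g : Fin q → E}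
    (hg : ∀ r : Fin q, HasSum (fun m : ℤ ↦ f (m * q + (r : ℕ))) (g r)) : HasSum f (∑ r, g r) := by
  let e : Fin q × ℤ ≃ ℤ := (Equiv.prodComm _ _).trans (Int.divModEquiv q).symm
  have hfiber : HasSum g (∑' k, f k) := (e.hasSum_iff.mpr hf.hasSum).prod_fiberwise hg
  rw [(hasSum_fintype g).unique hfiber]
  exact hf.hasSum

theorem Continuous.apply_intCast_eq_zero_of_support_subset_Icc {E : Type*} [TopologicalSpace E]
    [T1Space E] [Zero E] {φ : ℝ → E} (hc : Continuous φ)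
    (hs : Function.support φ ⊆ Set.Icc (-1) 1) {n : ℤ} (hn : n ≠ 0) : φ n = 0 := by
  have hopen : Function.support φ ⊆ Set.Ioo (-1) 1 := by
    rw [← interior_Icc]
    exact hc.isOpen_support.subset_interior_iff.mpr hs
  by_contra h
  obtain ⟨h₁, h₂⟩ := hopen h
  have : -1 < n ∧ n < 1 := by exact_mod_cast And.intro h₁ h₂
  omega

section Fourier

variable {E : Type*} [NormedAddCommGroup E]

theorem isBigO_rpow_neg_of_pow_mul_norm_le {g : ℝ → E} {N : ℕ} {C : ℝ}
    (hg : ∀ w, |w| ^ N * ‖g w‖ ≤ C) : g =O[cocompact ℝ] (|·| ^ (-(N : ℝ))) := by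
  refine IsBigO.of_bound C ?_
  filter_upwards [(isCompact_singleton (x := (0 : ℝ))).compl_mem_cocompact] with w hw
  have hw : 0 < |w| := abs_pos.mpr hw
  rw [Real.rpow_neg hw.le, Real.rpow_natCast, norm_inv, norm_pow, Real.norm_of_nonneg hw.le,
    ← div_eq_mul_inv, le_div_iff₀ (by positivity), mul_comm]
  exact hg w

theorem summable_norm_comp_mul_intCast {g : ℝ → E} {b : ℝ} (hb : 1 < b)
    (hg : g =O[cocompact ℝ] (|·| ^ (-b))) {a : ℝ} (ha : a ≠ 0) :
    Summable fun k : ℤ ↦ ‖g (a * k)‖ := by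
  have hscale : (fun x ↦ g (a * x)) =O[cocompact ℝ] (|·| ^ (-b)) := by
    refine (hg.comp_tendsto (Homeomorph.mulLeft₀ a ha).map_cocompact.le).trans
      (IsBigO.of_bound (|a| ^ (-b)) (Eventually.of_forall fun x ↦ ?_))
    simp [abs_mul, Real.mul_rpow (abs_nonneg a) (abs_nonneg x), abs_of_nonneg,
      Real.rpow_nonneg]
  exact summable_of_isBigO (Real.summable_abs_int_rpow hb)
    (hscale.norm_left.comp_tendsto Int.tendsto_coe_cofinite)

variable [NormedSpace ℂ E]

theorem isBigO_fourier_rpow_neg {f : ℝ → E} {N : ℕ} (hf : ContDiff ℝ N f)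
    (hs : HasCompactSupport f) : 𝓕 f =O[cocompact ℝ] (|·| ^ (-(N : ℝ))) := by
  have hint : ∀ k n : ℕ, k ≤ (0 : ℕ∞) → n ≤ (N : ℕ∞) →
      Integrable (fun v : ℝ ↦ ‖v‖ ^ k * ‖iteratedFDeriv ℝ n f v‖) := by
    intro k n hk hn
    obtain rfl : k = 0 := by exact_mod_cast nonpos_iff_eq_zero.mp hk
    simpa using ((hf.continuous_iteratedFDeriv (by exact_mod_cast hn)).norm
      ).integrable_of_hasCompactSupport (hs.iteratedFDeriv n).norm
  have hbound := fun w ↦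
    Real.pow_mul_norm_iteratedFDeriv_fourier_le hf hint le_rfl le_rfl w (k := 0) (n := N)
  exact isBigO_rpow_neg_of_pow_mul_norm_le fun w ↦ by simpa using hbound w

theorem fourier_cexp_smul (f : ℝ → E) (a w : ℝ) :
    𝓕 (fun u : ℝ ↦ Complex.exp (2 * π * I * a * u) • f u) w = 𝓕 f (w - a) := by
  simp only [Real.fourier_real_eq_integral_exp_smul, smul_smul, ← Complex.exp_add]
  congr! 4 with u
  push_cast
  ring

end Fourier

theorem integral_mul_cexp_div_eq_fourier (f : ℝ → ℂ) (a b : ℝ) :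
    ∫ u, f u * Complex.exp (2 * π * I * a * u / b) = 𝓕 f (-(a / b)) := by
  rw [Real.fourier_real_eq_integral_exp_smul]
  congr! 2 with u
  rw [smul_eq_mul, mul_comm]
  congr 2
  push_cast
  ring

theorem hasSum_fourier_add_intCast {φ : ℝ → ℂ} (hφ : ContDiff ℝ 2 φ) (hs : HasCompactSupport φ)
    (hzero : ∀ n : ℤ, n ≠ 0 → φ n = 0) (x : ℝ) :
    HasSum (fun n : ℤ ↦ 𝓕 φ (x + n)) (φ 0) := by
  set ψ : ℝ → ℂ := fun u ↦ Complex.exp (2 * π * I * (-x : ℝ) * u) • φ u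
  have hψ : ContDiff ℝ 2 ψ := by
    have hexp : ContDiff ℝ 2 fun u : ℝ ↦ Complex.exp (2 * π * I * (-x : ℝ) * u) :=
      (contDiff_const.mul ofRealCLM.contDiff).cexp
    exact hexp.smul hφ
  have hψs : HasCompactSupport ψ := hs.mono fun _ hu ↦ right_ne_zero_of_smul hu
  have hFψ : ∀ n : ℤ, 𝓕 ψ n = 𝓕 φ (x + n) := fun n ↦ by
    rw [fourier_cexp_smul, sub_neg_eq_add, add_comm]
  have hψO : ψ =O[cocompact ℝ] (|·| ^ (-(2 : ℝ))) := by
    refine (isBigO_zero _ _).congr' ?_ EventuallyEq.rfl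
    filter_upwards [hψs.compl_mem_cocompact] with u hu
    exact (image_eq_zero_of_notMem_tsupport hu).symm
  have hsum : Summable fun n : ℤ ↦ 𝓕 φ (x + n) := by
    refine (summable_norm_comp_mul_intCast one_lt_two (isBigO_fourier_rpow_neg hψ hψs)
      one_ne_zero).of_norm.congr fun n ↦ ?_
    rw [one_mul, hFψ]
  have hpoisson := Real.tsum_eq_tsum_fourier_of_rpow_decay_of_summable hψ.continuous one_lt_two
    hψO (hsum.congr fun n ↦ (hFψ n).symm) 0
  have hψint : ∑' n : ℤ, ψ (0 + n) = φ 0 := by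
    rw [tsum_eq_single 0 fun n hn ↦ by simp [ψ, hzero n hn]]
    simp [ψ]
  convert hsum.hasSum using 1
  rw [← hψint, hpoisson]
  simp [hFψ]

section Periodization

variable {φ : ℝ → ℂ} (hφ : ContDiff ℝ 2 φ) (hs : HasCompactSupport φ)
  (hzero : ∀ n : ℤ, n ≠ 0 → φ n = 0)
include hφ hs hzero

theorem hasSum_fourier_residueClass {q : ℝ} (hq : q ≠ 0) (r : ℝ) :
    HasSum (fun m : ℤ ↦ 𝓕 φ (-q⁻¹ * (m * q + r))) (φ 0) := by
  have hneg := (Equiv.neg ℤ).hasSum_iff.mpr (hasSum_fourier_add_intCast hφ hs hzero (-(r / q)))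
  refine hneg.congr_fun fun m ↦ congrArg (𝓕 φ) ?_
  simp only [Equiv.neg_apply, Int.cast_neg]
  field_simp
  ring

theorem hasSum_periodic_mul_fourier {q : ℕ} [NeZero q] {c : ℤ → ℂ}
    (hc : Function.Periodic c q) (hsum : Summable fun k : ℤ ↦ c k * 𝓕 φ (-(q : ℝ)⁻¹ * k)) :
    HasSum (fun k : ℤ ↦ c k * 𝓕 φ (-(q : ℝ)⁻¹ * k)) ((∑ r : Fin q, c (r : ℕ)) * φ 0) := by
  rw [Finset.sum_mul]
  refine Int.hasSum_sum_of_hasSum_residueClasses hsum q fun r ↦ ?_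
  have hres := (hasSum_fourier_residueClass hφ hs hzero (Nat.cast_ne_zero.mpr (NeZero.ne q))
    (r : ℕ)).mul_left (c (r : ℕ))
  refine hres.congr_fun fun m ↦ ?_
  have hper := hc.int_mul m (r : ℕ)
  rw [Int.cast_id, add_comm] at hper
  push_cast
  rw [hper]

end Periodization

noncomputable def gaussTerm (a b : ℤ) (c : ℕ) (k : ℤ) : ℂ :=
  Complex.exp (2 * π * I * ((a : ℂ) * (k : ℂ) ^ 2 + (b : ℂ) * (k : ℂ)) / (c : ℂ))

theorem gaussSumGen_eq_sum_gaussTerm (a b : ℤ) (c : ℕ) :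
    gaussSumGen a b c = ∑ ℓ : Fin c, gaussTerm a b c (ℓ : ℕ) := by
  simp [gaussSumGen, gaussTerm, Fin.sum_univ_eq_sum_range (fun ℓ ↦ Complex.exp
    (2 * π * I * ((a : ℂ) * (ℓ : ℂ) ^ 2 + (b : ℂ) * (ℓ : ℂ)) / (c : ℂ)))]

theorem gaussTerm_periodic (a b : ℤ) (c : ℕ) : Function.Periodic (gaussTerm a b c) c := by
  intro k
  rcases eq_or_ne c 0 with rfl | hc
  · simp
  have hcC : (c : ℂ) ≠ 0 := Nat.cast_ne_zero.mpr hc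
  refine Complex.exp_eq_exp_iff_exists_int.mpr ⟨2 * a * k + a * c + b, ?_⟩
  push_cast
  field_simp
  ring

theorem norm_gaussTerm (a b : ℤ) (c : ℕ) (k : ℤ) : ‖gaussTerm a b c k‖ = 1 := by
  rw [gaussTerm, Complex.norm_exp]
  simp [pow_two]

theorem gaussSum_recovered_exactly_general (q : ℕ) (hq : 1 ≤ q) (p : ℕ)
    (κ : ℕ)
    (φ : ℝ → ℂ) (hφ : ContDiff ℝ 2 φ) (hsupp : Function.support φ ⊆ Set.Icc (-1) 1)
    (hφ0 : φ 0 = 1) :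
    (Summable fun k : ℤ =>
      ‖Complex.exp (2 * Real.pi * Complex.I * ((-(p : ℤ) : ℂ) * (k : ℂ) ^ 2 + (κ : ℂ) * (k : ℂ)) / (q : ℂ)) *
        ∫ u : ℝ, φ u * Complex.exp (2 * Real.pi * Complex.I * (k : ℂ) * (u : ℂ) / (q : ℂ))‖) ∧
    gaussSumGen (-(p : ℤ)) (κ : ℤ) q
      = ∑' k : ℤ,
          Complex.exp (2 * Real.pi * Complex.I * ((-(p : ℤ) : ℂ) * (k : ℂ) ^ 2 + (κ : ℂ) * (k : ℂ)) / (q : ℂ)) *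
            ∫ u : ℝ, φ u * Complex.exp (2 * Real.pi * Complex.I * (k : ℂ) * (u : ℂ) / (q : ℂ)) := by
  have : NeZero q := ⟨by omega⟩
  have hterm (k : ℤ) : Complex.exp (2 * π * I * ((-(p : ℤ) : ℂ) * (k : ℂ) ^ 2 + (κ : ℂ) * (k : ℂ))
      / (q : ℂ)) = gaussTerm (-p) κ q k := by
    simp [gaussTerm]
  have hintegral (k : ℤ) : ∫ u : ℝ, φ u * Complex.exp (2 * π * I * (k : ℂ) * (u : ℂ) / (q : ℂ))
      = 𝓕 φ (-(q : ℝ)⁻¹ * k) := by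
    simpa [neg_div, div_eq_inv_mul] using integral_mul_cexp_div_eq_fourier φ k q
  simp only [hterm, hintegral]
  have hcs : HasCompactSupport φ := .of_support_subset_isCompact isCompact_Icc hsupp
  have hsum : Summable fun k : ℤ ↦ ‖gaussTerm (-p) κ q k * 𝓕 φ (-(q : ℝ)⁻¹ * k)‖ := by
    simpa [norm_gaussTerm] using summable_norm_comp_mul_intCast one_lt_two
      (isBigO_fourier_rpow_neg hφ hcs) (neg_ne_zero.mpr (inv_ne_zero (NeZero.ne (q : ℝ))))
  refine ⟨hsum, ?_⟩
  have hzero (n : ℤ) (hn : n ≠ 0) : φ n = 0 :=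
    hφ.continuous.apply_intCast_eq_zero_of_support_subset_Icc hsupp hn
  rw [(hasSum_periodic_mul_fourier hφ hcs hzero (gaussTerm_periodic _ _ _) hsum.of_norm).tsum_eq,
    hφ0, mul_one, gaussSumGen_eq_sum_gaussTerm]

/-- Tested form of Corollary 3.5 (with `M = 2π`): the generalized quadratic Gauss sum
`G(-p,κ,q)` is recovered exactly as `∑_{k∈ℤ} e^{2πi(-pk² + κk)/q} ∫ φ(u) e^{2πiku/q} du`,
for any C² function `φ` supported in `[-1,1]` with `φ(0) = 1`. -/
theorem gaussSum_recovered_exactly (q : ℕ) (hq : 1 ≤ q) (p : ℕ) (hp : p < q)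
    (hcop : Nat.Coprime p q) (κ : ℕ) (hκ : κ < q)
    (φ : ℝ → ℂ) (hφ : ContDiff ℝ 2 φ) (hsupp : Function.support φ ⊆ Set.Icc (-1) 1)
    (hφ0 : φ 0 = 1) :
    (Summable fun k : ℤ =>
      ‖Complex.exp (2 * Real.pi * Complex.I * ((-(p : ℤ) : ℂ) * (k : ℂ) ^ 2 + (κ : ℂ) * (k : ℂ)) / (q : ℂ)) *
        ∫ u : ℝ, φ u * Complex.exp (2 * Real.pi * Complex.I * (k : ℂ) * (u : ℂ) / (q : ℂ))‖) ∧
    gaussSumGen (-(p : ℤ)) (κ : ℤ) q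
      = ∑' k : ℤ,
          Complex.exp (2 * Real.pi * Complex.I * ((-(p : ℤ) : ℂ) * (k : ℂ) ^ 2 + (κ : ℂ) * (k : ℂ)) / (q : ℂ)) *
            ∫ u : ℝ, φ u * Complex.exp (2 * Real.pi * Complex.I * (k : ℂ) * (u : ℂ) / (q : ℂ)) :=
  gaussSum_recovered_exactly_general q hq p κ φ hφ hsupp hφ0
end

section
/- Let L ∈ ℕ, let c_{−L},…,c_L ∈ ℂ, let V(x) = ∑_{|ℓ|≤L} c_ℓ e^{iℓx}, and let α, ω ∈ ℝ, T ∈ (0,∞]. Let φ : [0,T) × ℝ → ℂ be a C² function, 2π-periodic in x, satisfying i ∂φ/∂t + α ∂²φ/∂x² = V(x + 2ωt) φ on [0,T) × ℝ. For k ∈ ℤ define ĉ_k(t) = (1/2π) ∫_0^{2π} φ(t,x) e^{−ikx} dx and ψ_k(t) = e^{iαk²t} ĉ_k(t). Then each ψ_k is differentiable on [0,T) and satisfies i ψ_k'(t) = ∑_{|ℓ|≤L} c_ℓ e^{2iℓωt} e^{iαℓ(2k−ℓ)t} ψ_{k−ℓ}(t) for all t ∈ [0,T) and all k ∈ ℤ.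 -/
open Complex

/-!
Differentiating `ĉ_k` under the integral sign and substituting the equation for `∂ₜφ`, the
Laplacian term integrates by parts twice, with no boundary terms by periodicity, to `-k² ĉ_k`,
while multiplication by `e^{iℓ(x + 2ωt)}` moves the index `k` to `k - ℓ`. The gauge factor
`e^{iαk²t}` removes the diagonal term `αk² ĉ_k`, and `e^{iαk²t} = e^{iαℓ(2k-ℓ)t} e^{iα(k-ℓ)²t}`
produces the phases of the coupled system.
-/

section ParametricIntegral

variable {E : Type*} [NormedAddCommGroup E] [NormedSpace ℝ E]

theorem hasDerivAt_intervalIntegral_of_contDiff {f : ℝ → ℝ → E}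
    (hf : ContDiff ℝ 1 fun p : ℝ × ℝ => f p.1 p.2) (a b t : ℝ) :
    HasDerivAt (fun s => ∫ x in a..b, f s x) (∫ x in a..b, deriv (fun s => f s x) t) t := by
  set f' : ℝ × ℝ → E := fun p => fderiv ℝ (fun p : ℝ × ℝ => f p.1 p.2) p (1, 0)
  have hf'_cont : Continuous f' := (hf.continuous_fderiv one_ne_zero).clm_apply continuous_const
  have hderiv (s x : ℝ) : HasDerivAt (fun s => f s x) (f' (s, x)) s :=
    HasFDerivAt.comp_hasDerivAt (l := fun p : ℝ × ℝ => f p.1 p.2) s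
      (hf.differentiable one_ne_zero (s, x)).hasFDerivAt
      ((hasDerivAt_id s).prodMk (hasDerivAt_const s x))
  have hf_slice : ∀ s, Continuous (f s) := fun s => hf.continuous.comp (Continuous.prodMk_right s)
  obtain ⟨M, hM⟩ := ((isCompact_closedBall t 1).prod
    (isCompact_uIcc (a := a) (b := b))).exists_bound_of_continuousOn hf'_cont.continuousOn
  have key := intervalIntegral.hasDerivAt_integral_of_dominated_loc_of_deriv_le
    (μ := MeasureTheory.volume) (F' := fun s x => f' (s, x)) (bound := fun _ => M)
    (Metric.ball_mem_nhds t one_pos)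
    (.of_forall fun s => (hf_slice s).aestronglyMeasurable) ((hf_slice t).intervalIntegrable a b)
    (hf'_cont.comp (Continuous.prodMk_right t)).aestronglyMeasurable
    (MeasureTheory.ae_of_all _ fun x hx s hs =>
      hM (s, x) ⟨Metric.ball_subset_closedBall hs, Set.uIoc_subset_uIcc hx⟩)
    intervalIntegrable_const (MeasureTheory.ae_of_all _ fun x _ s _ => hderiv s x)
  simpa only [(hderiv t _).deriv] using key.2

end ParametricIntegral

theorem Function.Periodic.deriv {𝕜 F : Type*} [NontriviallyNormedField 𝕜] [NormedAddCommGroup F]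
    [NormedSpace 𝕜 F] {f : 𝕜 → F} {c : 𝕜} (h : Function.Periodic f c) :
    Function.Periodic (deriv f) c := fun x => by
  rw [← deriv_comp_add_const, h.funext]

/-- `2π ĉ_n` in the notation of the paper. -/
noncomputable def unnormalizedFourierCoeff (f : ℝ → ℂ) (n : ℤ) : ℂ :=
  ∫ x in (0 : ℝ)..(2 * Real.pi), f x * exp (-I * n * x)

theorem hasDerivAt_exp_mul_ofReal (m : ℂ) (x : ℝ) :
    HasDerivAt (fun x : ℝ => exp (m * x)) (m * exp (m * x)) x := by
  simpa [mul_comm] using ((hasDerivAt_id x).ofReal_comp.const_mul m).cexp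

theorem exp_neg_I_mul_two_pi (n : ℤ) : exp (-I * n * (2 * Real.pi : ℝ)) = 1 := by
  rw [← exp_int_mul_two_pi_mul_I (-n)]
  push_cast
  ring_nf

theorem intervalIntegrable_mul_exp_neg_I_mul {f : ℝ → ℂ} (hf : Continuous f) (n : ℤ) (a b : ℝ) :
    IntervalIntegrable (fun x : ℝ => f x * exp (-I * n * x)) MeasureTheory.volume a b :=
  (hf.mul (by fun_prop)).intervalIntegrable a b

theorem unnormalizedFourierCoeff_mul_add_mul {f g : ℝ → ℂ} (hf : Continuous f)
    (hg : Continuous g) (a b : ℂ) (n : ℤ) :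
    unnormalizedFourierCoeff (fun x => a * f x + b * g x) n =
      a * unnormalizedFourierCoeff f n + b * unnormalizedFourierCoeff g n := by
  rw [unnormalizedFourierCoeff, intervalIntegral.integral_congr (g := fun x : ℝ =>
      a * (f x * exp (-I * n * x)) + b * (g x * exp (-I * n * x))) fun x _ => by ring,
    intervalIntegral.integral_add ((intervalIntegrable_mul_exp_neg_I_mul hf n _ _).const_mul a)
      ((intervalIntegrable_mul_exp_neg_I_mul hg n _ _).const_mul b),
    intervalIntegral.integral_const_mul, intervalIntegral.integral_const_mul]
  rfl

theorem unnormalizedFourierCoeff_of_hasDerivAt {f f' : ℝ → ℂ}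
    (hper : Function.Periodic f (2 * Real.pi)) (hf : ∀ x, HasDerivAt f (f' x) x)
    (hf' : Continuous f') (n : ℤ) :
    unnormalizedFourierCoeff f' n = I * n * unnormalizedFourierCoeff f n := by
  have hf_cont : Continuous f := continuous_iff_continuousAt.2 fun x => (hf x).continuousAt
  have hparts := intervalIntegral.integral_deriv_mul_eq_sub (a := 0) (b := 2 * Real.pi)
    (fun x _ => hf x) (fun x _ => hasDerivAt_exp_mul_ofReal _ x)
    (hf'.intervalIntegrable _ _)
    ((by fun_prop : Continuous fun x : ℝ => -I * n * exp (-I * n * x)).intervalIntegrable _ _)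
  rw [intervalIntegral.integral_congr (g := fun x : ℝ =>
      f' x * exp (-I * n * x) + (-I * n) * (f x * exp (-I * n * x))) fun x _ => by ring,
    intervalIntegral.integral_add (intervalIntegrable_mul_exp_neg_I_mul hf' n _ _)
      ((intervalIntegrable_mul_exp_neg_I_mul hf_cont n _ _).const_mul _),
    intervalIntegral.integral_const_mul, exp_neg_I_mul_two_pi,
    (by simpa using hper 0 : f (2 * Real.pi) = f 0)] at hparts
  simp only [ofReal_zero, mul_zero, exp_zero, mul_one, sub_self] at hparts
  rw [unnormalizedFourierCoeff, unnormalizedFourierCoeff]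
  linear_combination hparts

theorem unnormalizedFourierCoeff_iteratedDeriv_two {f : ℝ → ℂ} (hf : ContDiff ℝ 2 f)
    (hper : Function.Periodic f (2 * Real.pi)) (n : ℤ) :
    unnormalizedFourierCoeff (iteratedDeriv 2 f) n = -n ^ 2 * unnormalizedFourierCoeff f n := by
  have hf' : ContDiff ℝ 1 (deriv f) := (contDiff_succ_iff_deriv.mp hf).2.2
  rw [iteratedDeriv_succ, iteratedDeriv_one, unnormalizedFourierCoeff_of_hasDerivAt hper.deriv
      (fun x => (hf'.differentiable one_ne_zero x).hasDerivAt) (hf'.continuous_deriv le_rfl),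
    unnormalizedFourierCoeff_of_hasDerivAt hper
      (fun x => (hf.differentiable two_ne_zero x).hasDerivAt) hf'.continuous]
  linear_combination (n : ℂ) ^ 2 * unnormalizedFourierCoeff f n * I_sq

theorem unnormalizedFourierCoeff_trigPoly_mul {f : ℝ → ℂ} (hf : Continuous f) (S : Finset ℤ)
    (c : ℤ → ℂ) (β : ℂ) (k : ℤ) :
    unnormalizedFourierCoeff (fun x => (∑ ℓ ∈ S, c ℓ * exp (I * ℓ * (x + β))) * f x) k =
      ∑ ℓ ∈ S, c ℓ * exp (I * ℓ * β) * unnormalizedFourierCoeff f (k - ℓ) := by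
  have hterm (ℓ : ℤ) (x : ℝ) : c ℓ * exp (I * ℓ * (x + β)) * f x * exp (-I * k * x) =
      c ℓ * exp (I * ℓ * β) * (f x * exp (-I * ((k - ℓ : ℤ) : ℂ) * x)) := by
    have hexp : exp (I * ℓ * (x + β)) * exp (-I * k * x) =
        exp (I * ℓ * β) * exp (-I * ((k - ℓ : ℤ) : ℂ) * x) := by
      rw [← exp_add, ← exp_add]
      push_cast
      ring_nf
    linear_combination c ℓ * f x * hexp
  simp only [unnormalizedFourierCoeff, Finset.sum_mul, hterm]
  rw [intervalIntegral.integral_finsetSum fun ℓ _ =>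
    (intervalIntegrable_mul_exp_neg_I_mul hf _ _ _).const_mul _]
  exact Finset.sum_congr rfl fun ℓ _ => intervalIntegral.integral_const_mul _ _

theorem hasDerivAt_unnormalizedFourierCoeff {φ : ℝ → ℝ → ℂ}
    (hφ : ContDiff ℝ 1 fun p : ℝ × ℝ => φ p.1 p.2) (n : ℤ) (t : ℝ) :
    HasDerivAt (fun s => unnormalizedFourierCoeff (φ s) n)
      (unnormalizedFourierCoeff (fun x => deriv (fun s => φ s x) t) n) t := by
  have hweighted : ContDiff ℝ 1 fun p : ℝ × ℝ => φ p.1 p.2 * exp (-I * n * p.2) :=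
    hφ.mul ((contDiff_const.mul (ofRealCLM.contDiff.comp contDiff_snd)).cexp)
  have hslice (x : ℝ) : DifferentiableAt ℝ (fun s => φ s x) t :=
    DifferentiableAt.comp (g := fun p : ℝ × ℝ => φ p.1 p.2) (f := fun s : ℝ => (s, x)) t
      (hφ.differentiable one_ne_zero _) (by fun_prop)
  simpa only [unnormalizedFourierCoeff, deriv_mul_const (hslice _)] using
    hasDerivAt_intervalIntegral_of_contDiff
      (f := fun s x => φ s x * exp (-I * n * x)) hweighted 0 (2 * Real.pi) t

theorem hasDerivAt_unnormalizedFourierCoeff_of_schrodinger {φ : ℝ → ℝ → ℂ}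
    (hφ : ContDiff ℝ 2 fun p : ℝ × ℝ => φ p.1 p.2) {t : ℝ}
    (hper : Function.Periodic (φ t) (2 * Real.pi)) (S : Finset ℤ) (c : ℤ → ℂ) (α β : ℂ)
    (hPDE : ∀ x : ℝ, I * deriv (fun s => φ s x) t + α * iteratedDeriv 2 (φ t) x =
      (∑ ℓ ∈ S, c ℓ * exp (I * ℓ * (x + β))) * φ t x) (k : ℤ) :
    HasDerivAt (fun s => unnormalizedFourierCoeff (φ s) k)
      (-I * (α * k ^ 2 * unnormalizedFourierCoeff (φ t) k +
        ∑ ℓ ∈ S, c ℓ * exp (I * ℓ * β) * unnormalizedFourierCoeff (φ t) (k - ℓ))) t := by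
  have hφt : ContDiff ℝ 2 (φ t) := hφ.comp (contDiff_const.prodMk contDiff_id)
  have hVφ : Continuous fun x : ℝ => (∑ ℓ ∈ S, c ℓ * exp (I * ℓ * (x + β))) * φ t x := by
    have := hφt.continuous
    fun_prop
  have hdt : (fun x => deriv (fun s => φ s x) t) = fun x => I * α * iteratedDeriv 2 (φ t) x +
      -I * ((∑ ℓ ∈ S, c ℓ * exp (I * ℓ * (x + β))) * φ t x) := funext fun x => by
    linear_combination -I * hPDE x + deriv (fun s => φ s x) t * I_sq
  have h := hasDerivAt_unnormalizedFourierCoeff (hφ.of_le (by norm_num)) k t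
  rw [hdt, unnormalizedFourierCoeff_mul_add_mul (hφt.continuous_iteratedDeriv 2 le_rfl) hVφ,
    unnormalizedFourierCoeff_iteratedDeriv_two hφt hper,
    unnormalizedFourierCoeff_trigPoly_mul hφt.continuous] at h
  exact h.congr_deriv (by ring)

theorem fourier_coefficients_system_general (L : ℕ) (c : ℤ → ℂ) (α ω : ℝ) (T : EReal)
    (φ : ℝ → ℝ → ℂ) (hφ : ContDiff ℝ 2 fun p : ℝ × ℝ => φ p.1 p.2)
    (hper : ∀ t x : ℝ, φ t (x + 2 * Real.pi) = φ t x)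
    (hPDE : ∀ t x : ℝ, 0 ≤ t → (t : EReal) < T →
        Complex.I * deriv (fun s => φ s x) t + (α : ℂ) * iteratedDeriv 2 (fun y => φ t y) x
          = (∑ ℓ ∈ Finset.Icc (-(L : ℤ)) (L : ℤ),
              c ℓ * Complex.exp (Complex.I * (ℓ : ℂ) * ((x : ℂ) + 2 * (ω : ℂ) * (t : ℂ)))) *
            φ t x)
    (ψ : ℤ → ℝ → ℂ)
    (hψ : ∀ (k : ℤ) (t : ℝ),
      ψ k t = Complex.exp (Complex.I * (α : ℂ) * (k : ℂ) ^ 2 * (t : ℂ)) *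
        ((1 / (2 * (Real.pi : ℂ))) *
          ∫ x in (0 : ℝ)..(2 * Real.pi), φ t x * Complex.exp (-Complex.I * (k : ℂ) * (x : ℂ)))) :
    ∀ (k : ℤ) (t : ℝ), 0 ≤ t → (t : EReal) < T →
      HasDerivWithinAt (ψ k)
        (-Complex.I *
          ∑ ℓ ∈ Finset.Icc (-(L : ℤ)) (L : ℤ),
            c ℓ * Complex.exp (2 * Complex.I * (ℓ : ℂ) * (ω : ℂ) * (t : ℂ)) *
              Complex.exp (Complex.I * (α : ℂ) * (ℓ : ℂ) * (2 * (k : ℂ) - (ℓ : ℂ)) * (t : ℂ)) *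
              ψ (k - ℓ) t)
        {s : ℝ | 0 ≤ s ∧ (s : EReal) < T} t := by
  intro k t ht0 htT
  have hC := hasDerivAt_unnormalizedFourierCoeff_of_schrodinger hφ (hper t) _ c α (2 * ω * t)
    (fun x => hPDE t x ht0 htT) k
  have hψC (n : ℤ) (s : ℝ) : ψ n s =
      exp (I * α * n ^ 2 * s) * (1 / (2 * Real.pi) * unnormalizedFourierCoeff (φ s) n) :=
    hψ n s
  have hphase (ℓ : ℤ) : exp (2 * I * ℓ * ω * t) * exp (I * α * ℓ * (2 * k - ℓ) * t) *
      exp (I * α * ((k - ℓ : ℤ) : ℂ) ^ 2 * t) =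
        exp (I * α * k ^ 2 * t) * exp (I * ℓ * (2 * ω * t)) := by
    simp only [← exp_add]
    push_cast
    ring_nf
  have hterm (ℓ : ℤ) : c ℓ * exp (2 * I * ℓ * ω * t) * exp (I * α * ℓ * (2 * k - ℓ) * t) *
      ψ (k - ℓ) t = exp (I * α * k ^ 2 * t) * (1 / (2 * Real.pi)) *
        (c ℓ * exp (I * ℓ * (2 * ω * t)) * unnormalizedFourierCoeff (φ t) (k - ℓ)) := by
    rw [hψC]
    linear_combination
      c ℓ * (1 / (2 * Real.pi)) * unnormalizedFourierCoeff (φ t) (k - ℓ) * hphase ℓ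
  rw [funext (hψC k)]
  refine (((hasDerivAt_exp_mul_ofReal _ t).mul (hC.const_mul _)).congr_deriv ?_).hasDerivWithinAt
  rw [Finset.sum_congr rfl fun ℓ _ => hterm ℓ, ← Finset.mul_sum]
  ring

/-- Smooth-solution version of Lemma 4.1 for a trigonometric-polynomial potential
`V(x) = ∑_{|ℓ|≤L} c_ℓ e^{iℓx}`: if `φ` is a C² solution, 2π-periodic in `x`, of
`i ∂ₜφ + α ∂ₓₓφ = V(x + 2ωt) φ` on `[0,T) × ℝ`, then the modified Fourier coefficients
`ψ_k(t) = e^{iαk²t} ĉ_k(t)` are differentiable on `[0,T)` and satisfy the coupled system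
`i ψ_k'(t) = ∑_{|ℓ|≤L} c_ℓ e^{2iℓωt} e^{iαℓ(2k-ℓ)t} ψ_{k-ℓ}(t)`. -/
theorem fourier_coefficients_system (L : ℕ) (c : ℤ → ℂ) (α ω : ℝ) (T : EReal) (hT : 0 < T)
    (φ : ℝ → ℝ → ℂ) (hφ : ContDiff ℝ 2 fun p : ℝ × ℝ => φ p.1 p.2)
    (hper : ∀ t x : ℝ, φ t (x + 2 * Real.pi) = φ t x)
    (hPDE : ∀ t x : ℝ, 0 ≤ t → (t : EReal) < T →
        Complex.I * deriv (fun s => φ s x) t + (α : ℂ) * iteratedDeriv 2 (fun y => φ t y) x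
          = (∑ ℓ ∈ Finset.Icc (-(L : ℤ)) (L : ℤ),
              c ℓ * Complex.exp (Complex.I * (ℓ : ℂ) * ((x : ℂ) + 2 * (ω : ℂ) * (t : ℂ)))) *
            φ t x)
    (ψ : ℤ → ℝ → ℂ)
    (hψ : ∀ (k : ℤ) (t : ℝ),
      ψ k t = Complex.exp (Complex.I * (α : ℂ) * (k : ℂ) ^ 2 * (t : ℂ)) *
        ((1 / (2 * (Real.pi : ℂ))) *
          ∫ x in (0 : ℝ)..(2 * Real.pi), φ t x * Complex.exp (-Complex.I * (k : ℂ) * (x : ℂ)))) :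
    ∀ (k : ℤ) (t : ℝ), 0 ≤ t → (t : EReal) < T →
      HasDerivWithinAt (ψ k)
        (-Complex.I *
          ∑ ℓ ∈ Finset.Icc (-(L : ℤ)) (L : ℤ),
            c ℓ * Complex.exp (2 * Complex.I * (ℓ : ℂ) * (ω : ℂ) * (t : ℂ)) *
              Complex.exp (Complex.I * (α : ℂ) * (ℓ : ℂ) * (2 * (k : ℂ) - (ℓ : ℂ)) * (t : ℂ)) *
              ψ (k - ℓ) t)
        {s : ℝ | 0 ≤ s ∧ (s : EReal) < T} t :=
  fourier_coefficients_system_general L c α ω T φ hφ hper hPDE ψ hψ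
end
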